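/- Let J_DD be symmetric negative definite, J_DG have full column rank, and η > 0 satisfy η < 1/(2 λ_max(-J_DD)). Then the matrix M = [[J_DD, J_DG], [-J_DG^T (I + 2η J_DD), -2η J_DG^T J_DG]] is Hurwitz. -/

import Mathlib

/-!
With `L = [[1, 0], [-2η J_DGᵀ, 1]]` the Jacobian factors as `L * M₀`, where
`M₀ = [[J_DD, J_DG], [-J_DGᵀ, 0]]`, and `A * B` and `B * A` have the same characteristic
polynomial. So the Jacobian has the spectrum of `M₀ * L = [[S, J_DG], [-J_DGᵀ, 0]]` with
`S = J_DD - 2η J_DG J_DGᵀ`, which is negative definite. For any matrix `[[S, B], [-Bᴴ, 0]]` with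
`S` negative definite and `B` injective, an eigenvector `v = (x, y)` for `μ` satisfies
`Re μ · ‖v‖² = Re (xᴴ S x)`, because the off-diagonal part is skew-Hermitian; and `x ≠ 0`, since
otherwise `B y = 0`. Hence `Re μ < 0`.
-/

open Matrix
open scoped ComplexOrder

def IsHurwitz {ι : Type*} [Fintype ι] [DecidableEq ι] (A : Matrix ι ι ℝ) : Prop :=
  ∀ μ ∈ spectrum ℂ (A.map Complex.ofReal), μ.re < 0

namespace Matrix

section Field

variable {ι : Type*} [Fintype ι] [DecidableEq ι] {K : Type*} [Field K]

theorem spectrum_mul_comm (A B : Matrix ι ι K) : spectrum K (A * B) = spectrum K (B * A) := by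
  ext μ
  simp only [mem_spectrum_iff_isRoot_charpoly, charpoly_mul_comm]

theorem exists_mulVec_eq_smul_of_mem_spectrum {A : Matrix ι ι K} {μ : K}
    (hμ : μ ∈ spectrum K A) : ∃ v, v ≠ 0 ∧ A *ᵥ v = μ • v := by
  rw [← spectrum_toLin'] at hμ
  obtain ⟨v, hv⟩ := (Module.End.hasEigenvalue_iff_mem_spectrum.2 hμ).exists_hasEigenvector
  exact ⟨v, hv.2, by simpa using hv.apply_eq_smul⟩

end Field

theorem mulVec_injective_of_rank_eq {ι κ K : Type*} [Fintype κ] [Field K] {A : Matrix ι κ K}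
    (hA : A.rank = Fintype.card κ) : Function.Injective A.mulVec := by
  have hker : Module.finrank K (LinearMap.ker A.mulVecLin) = 0 := by
    have := LinearMap.finrank_range_add_finrank_ker A.mulVecLin
    rw [Module.finrank_fintype_fun_eq_card] at this
    have hrange : Module.finrank K (LinearMap.range A.mulVecLin) = Fintype.card κ := hA
    omega
  exact LinearMap.ker_eq_bot.mp (Submodule.finrank_eq_zero.mp hker)

section RCLike

variable {𝕜 : Type*} [RCLike 𝕜]

theorem re_star_dotProduct_mulVec_eq_zero {ι : Type*} [Fintype ι] {K : Matrix ι ι 𝕜}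
    (hK : Kᴴ = -K) (v : ι → 𝕜) : RCLike.re (star v ⬝ᵥ K *ᵥ v) = 0 := by
  have hstar : star (star v ⬝ᵥ K *ᵥ v) = -(star v ⬝ᵥ K *ᵥ v) :=
    calc star (star v ⬝ᵥ K *ᵥ v) = star (K *ᵥ v) ⬝ᵥ v := by rw [star_dotProduct, star_star]
      _ = star v ⬝ᵥ Kᴴ *ᵥ v := by rw [star_mulVec, dotProduct_mulVec]
      _ = -(star v ⬝ᵥ K *ᵥ v) := by rw [hK, neg_mulVec, dotProduct_neg]
  have hre := congrArg RCLike.re hstar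
  rw [RCLike.star_def, RCLike.conj_re, map_neg] at hre
  linarith

variable {n m : Type*} [Fintype n] [Fintype m]

theorem re_star_dotProduct_fromBlocks_mulVec (S : Matrix n n 𝕜) (B : Matrix n m 𝕜)
    (v : n ⊕ m → 𝕜) :
    RCLike.re (star v ⬝ᵥ fromBlocks S B (-Bᴴ) 0 *ᵥ v)
      = RCLike.re (star (v ∘ Sum.inl) ⬝ᵥ S *ᵥ (v ∘ Sum.inl)) := by
  have hskew : (fromBlocks 0 B (-Bᴴ) 0)ᴴ = -fromBlocks 0 B (-Bᴴ) 0 := by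
    simp [fromBlocks_conjTranspose, fromBlocks_neg]
  have hsplit : fromBlocks S B (-Bᴴ) 0 = fromBlocks S 0 0 0 + fromBlocks 0 B (-Bᴴ) 0 := by
    simp [fromBlocks_add]
  have hv : v = Sum.elim (v ∘ Sum.inl) (v ∘ Sum.inr) := (Sum.elim_comp_inl_inr v).symm
  have hstar : star v = Sum.elim (star (v ∘ Sum.inl)) (star (v ∘ Sum.inr)) := by
    ext (i | i) <;> rfl
  rw [hsplit, add_mulVec, dotProduct_add, map_add, re_star_dotProduct_mulVec_eq_zero hskew,
    add_zero, hstar]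
  conv_lhs => rw [hv]
  simp [fromBlocks_mulVec, sumElim_dotProduct_sumElim]

theorem re_lt_zero_of_mem_spectrum_fromBlocks [DecidableEq n] [DecidableEq m]
    {S : Matrix n n 𝕜} {B : Matrix n m 𝕜} (hS : (-S).PosDef) (hB : Function.Injective B.mulVec)
    {μ : 𝕜} (hμ : μ ∈ spectrum 𝕜 (fromBlocks S B (-Bᴴ) 0)) : RCLike.re μ < 0 := by
  obtain ⟨v, hv0, hv⟩ := exists_mulVec_eq_smul_of_mem_spectrum hμ
  have hx : v ∘ Sum.inl ≠ 0 := by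
    intro hx
    have hBy : B *ᵥ (v ∘ Sum.inr) = 0 := by
      have h := congrArg (· ∘ Sum.inl) hv
      rw [fromBlocks_mulVec] at h
      simpa [hx, Pi.smul_comp] using h
    have hy : v ∘ Sum.inr = 0 := hB (by rw [hBy, mulVec_zero])
    exact hv0 (by ext (i | i) <;> [exact congrFun hx i; exact congrFun hy i])
  have hSx : RCLike.re (star (v ∘ Sum.inl) ⬝ᵥ S *ᵥ (v ∘ Sum.inl)) < 0 := by
    have := (RCLike.pos_iff.1 (hS.dotProduct_mulVec_pos hx)).1
    rwa [neg_mulVec, dotProduct_neg, map_neg, neg_pos] at this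
  obtain ⟨hN, hNim⟩ := RCLike.pos_iff.1 (dotProduct_star_self_pos_iff.2 hv0)
  have key := congrArg RCLike.re (congrArg (star v ⬝ᵥ ·) hv)
  simp only [re_star_dotProduct_fromBlocks_mulVec, dotProduct_smul, smul_eq_mul, RCLike.mul_re,
    hNim, mul_zero, sub_zero] at key
  nlinarith

end RCLike

section Complexification

variable {ι κ : Type*} [Fintype ι]

theorem re_comp_mulVec_map_ofReal (A : Matrix κ ι ℝ) (x : ι → ℂ) :
    Complex.re ∘ (A.map Complex.ofReal *ᵥ x) = A *ᵥ (Complex.re ∘ x) := by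
  ext i
  simp [mulVec, dotProduct, Complex.re_sum]

theorem im_comp_mulVec_map_ofReal (A : Matrix κ ι ℝ) (x : ι → ℂ) :
    Complex.im ∘ (A.map Complex.ofReal *ᵥ x) = A *ᵥ (Complex.im ∘ x) := by
  ext i
  simp [mulVec, dotProduct, Complex.im_sum]

theorem re_star_dotProduct (x z : ι → ℂ) :
    (star x ⬝ᵥ z).re
      = (Complex.re ∘ x) ⬝ᵥ (Complex.re ∘ z) + (Complex.im ∘ x) ⬝ᵥ (Complex.im ∘ z) := by
  simp [dotProduct, Complex.re_sum, Finset.sum_add_distrib]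

theorem mulVec_map_ofReal_injective {A : Matrix κ ι ℝ} (hA : Function.Injective A.mulVec) :
    Function.Injective (A.map Complex.ofReal).mulVec := by
  intro x y hxy
  have hre := congrArg (Complex.re ∘ ·) hxy
  have him := congrArg (Complex.im ∘ ·) hxy
  simp only [re_comp_mulVec_map_ofReal, im_comp_mulVec_map_ofReal] at hre him
  funext i
  exact Complex.ext (congrFun (hA hre) i) (congrFun (hA him) i)

theorem PosDef.map_ofReal {A : Matrix ι ι ℝ} (hA : A.PosDef) :
    (A.map Complex.ofReal).PosDef := by
  have hherm : (A.map Complex.ofReal).IsHermitian :=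
    hA.1.map _ fun r => (Complex.conj_ofReal r).symm
  refine posDef_iff_dotProduct_mulVec.2 ⟨hherm, fun x hx => Complex.pos_iff.2 ⟨?_, ?_⟩⟩
  · rw [re_star_dotProduct, re_comp_mulVec_map_ofReal, im_comp_mulVec_map_ofReal]
    have hpos : ∀ a, a ≠ 0 → 0 < a ⬝ᵥ A *ᵥ a := fun a ha => by
      simpa using hA.dotProduct_mulVec_pos ha
    have hnonneg : ∀ a, 0 ≤ a ⬝ᵥ A *ᵥ a := fun a => by
      simpa using hA.posSemidef.dotProduct_mulVec_nonneg a
    obtain h | h : Complex.re ∘ x ≠ 0 ∨ Complex.im ∘ x ≠ 0 := by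
      by_contra! h
      exact hx (funext fun i => Complex.ext (congrFun h.1 i) (congrFun h.2 i))
    · linarith [hpos _ h, hnonneg (Complex.im ∘ x)]
    · linarith [hpos _ h, hnonneg (Complex.re ∘ x)]
  · exact (hherm.im_star_dotProduct_mulVec_self x).symm

end Complexification

end Matrix

theorem isHurwitz_mul_comm {ι : Type*} [Fintype ι] [DecidableEq ι] (A B : Matrix ι ι ℝ) :
    IsHurwitz (A * B) ↔ IsHurwitz (B * A) := by
  have hmap (X Y : Matrix ι ι ℝ) :
      (X * Y).map Complex.ofReal = X.map Complex.ofReal * Y.map Complex.ofReal :=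
    Matrix.map_mul (f := Complex.ofRealHom)
  simp only [IsHurwitz, hmap, spectrum_mul_comm]

theorem isHurwitz_fromBlocks {n m : Type*} [Fintype n] [Fintype m] [DecidableEq n]
    [DecidableEq m] {S : Matrix n n ℝ} {B : Matrix n m ℝ} (hS : (-S).PosDef)
    (hB : Function.Injective B.mulVec) : IsHurwitz (fromBlocks S B (-Bᵀ) 0) := by
  intro μ hμ
  have hmap : (fromBlocks S B (-Bᵀ) 0).map Complex.ofReal
      = fromBlocks (S.map Complex.ofReal) (B.map Complex.ofReal)
        (-(B.map Complex.ofReal)ᴴ) 0 := by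
    rw [fromBlocks_map]
    congr 1
    ext
    simp
  rw [hmap] at hμ
  refine re_lt_zero_of_mem_spectrum_fromBlocks ?_ (mulVec_map_ofReal_injective hB) hμ
  simpa [Matrix.map_neg _ Complex.ofReal_neg] using hS.map_ofReal

theorem regularized_gan_jacobian_hurwitz_general {n m : ℕ}
    (JDD : Matrix (Fin n) (Fin n) ℝ) (hnd : (-JDD).PosDef)
    (JDG : Matrix (Fin n) (Fin m) ℝ) (hr : JDG.rank = m)
    (η : ℝ) (hη : 0 < η) :
    IsHurwitz (fromBlocks JDD JDG
      (-(JDGᵀ * (1 + (2 * η) • JDD))) ((-(2 * η)) • (JDGᵀ * JDG))) := by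
  set S := JDD - (2 * η) • (JDG * JDGᵀ)
  have hS : (-S).PosDef := by
    have hGG := (posSemidef_self_mul_conjTranspose JDG).smul (by positivity : (0 : ℝ) ≤ 2 * η)
    rw [conjTranspose_eq_transpose_of_trivial] at hGG
    rw [neg_sub, sub_eq_neg_add]
    exact hnd.add_posSemidef hGG
  have hfactor : fromBlocks JDD JDG (-(JDGᵀ * (1 + (2 * η) • JDD))) ((-(2 * η)) • (JDGᵀ * JDG))
      = fromBlocks 1 0 ((-(2 * η)) • JDGᵀ) 1 * fromBlocks JDD JDG (-JDGᵀ) 0 := by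
    rw [fromBlocks_multiply]
    congr 1 <;> simp [Matrix.mul_add, Matrix.smul_mul, Matrix.mul_smul, add_comm]
  have hswap : fromBlocks JDD JDG (-JDGᵀ) 0 * fromBlocks 1 0 ((-(2 * η)) • JDGᵀ) 1
      = fromBlocks S JDG (-JDGᵀ) 0 := by
    rw [fromBlocks_multiply]
    congr 1 <;> simp [S, sub_eq_add_neg]
  rw [hfactor, isHurwitz_mul_comm, hswap]
  exact isHurwitz_fromBlocks hS (mulVec_injective_of_rank_eq (by simpa using hr))

theorem regularized_gan_jacobian_hurwitz {n m : ℕ}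
    (JDD : Matrix (Fin n) (Fin n) ℝ) (hsym : JDD.IsSymm) (hnd : (-JDD).PosDef)
    (JDG : Matrix (Fin n) (Fin m) ℝ) (hr : JDG.rank = m)
    (η : ℝ) (hη : 0 < η)
    (hηb : ∀ μ ∈ spectrum ℝ (-JDD), η < 1 / (2 * μ)) :
    IsHurwitz (fromBlocks JDD JDG
      (-(JDGᵀ * (1 + (2 * η) • JDD))) ((-(2 * η)) • (JDGᵀ * JDG))) :=
  regularized_gan_jacobian_hurwitz_general JDD hnd JDG hr η hη
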